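/- Let (V,E,μ,m) be a complete weighted graph (admitting a nondecreasing sequence η_k ∈ C₀(V) with η_k → 1 pointwise and Γ(η_k) ≤ 1/k). Then the integration-by-parts (Green's) formula holds: for every f ∈ D(Q) and g ∈ D(Δ), Σ_{x∈V} f(x) Δg(x) m(x) = − Σ_{x∈V} Γ(f,g)(x) m(x). -/
import Mathlib


open scoped BigOperators
open Real Filter

noncomputable section

/-- Graph Laplacian: `Δ f x = (1/m x) * Σ_y μ x y * (f y - f x)`. -/
def glap {V : Type*} (m : V → ℝ) (μ : V → V → ℝ) (f : V → ℝ) (x : V) : ℝ :=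
  (1 / m x) * ∑' y, μ x y * (f y - f x)

/-- Carré du champ: `Γ(f,g) = (1/2)(Δ(fg) - fΔg - gΔf)`. -/
def ggam {V : Type*} (m : V → ℝ) (μ : V → V → ℝ) (f g : V → ℝ) (x : V) : ℝ :=
  (1 / 2) * (glap m μ (fun y => f y * g y) x - f x * glap m μ g x - g x * glap m μ f x)

/-- Iterated carré du champ: `Γ₂(f) = (1/2)ΔΓ(f) - Γ(f, Δf)`. -/
def ggam2 {V : Type*} (m : V → ℝ) (μ : V → V → ℝ) (f : V → ℝ) (x : V) : ℝ :=
  (1 / 2) * glap m μ (fun y => ggam m μ f f y) x - ggam m μ f (glap m μ f) x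

/-- Completeness of a weighted graph: a nondecreasing sequence of finitely
supported cut-off functions `η k` tending to `1` with `Γ(η k) ≤ 1/k`. -/
def IsCompleteGraph {V : Type*} (m : V → ℝ) (μ : V → V → ℝ) : Prop :=
  ∃ η : ℕ → V → ℝ, (∀ k, (Function.support (η k)).Finite) ∧
    (∀ x, Monotone fun k => η k x) ∧
    (∀ x, Tendsto (fun k => η k x) atTop (nhds 1)) ∧
    (∀ k : ℕ, 1 ≤ k → ∀ x, ggam m μ (η k) (η k) x ≤ 1 / (k : ℝ))

section Stmt7Aux

variable {V : Type*}

lemma summable_of_finsupp {ι : Type*} {f : ι → ℝ} (h : (Function.support f).Finite) :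
    Summable f :=
  summable_of_ne_finset_zero (s := h.toFinset) fun b hb => by
    by_contra hfb
    exact hb (h.mem_toFinset.mpr hfb)

lemma two_abs_le (a b : ℝ) : |a * b| ≤ (a ^ 2 + b ^ 2) / 2 := by
  rw [abs_mul]
  nlinarith [sq_nonneg (|a| - |b|), sq_abs a, sq_abs b, abs_nonneg a, abs_nonneg b]

lemma abs_mul_mul_le (a b c : ℝ) (hc : 0 ≤ c) : |a * b| * c ≤ (c * a ^ 2 + c * b ^ 2) / 2 := by
  rw [abs_mul]
  nlinarith [sq_nonneg (|a| - |b|), sq_abs a, sq_abs b, abs_nonneg a, abs_nonneg b,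
    mul_nonneg (mul_nonneg (abs_nonneg a) (abs_nonneg b)) hc]

lemma tsum_abs_mul_le {ι : Type*} (a b : ι → ℝ) (ha : Summable fun i => a i ^ 2)
    (hb : Summable fun i => b i ^ 2) :
    (Summable fun i => a i * b i) ∧
      |∑' i, a i * b i| ≤ Real.sqrt (∑' i, a i ^ 2) * Real.sqrt (∑' i, b i ^ 2) := by
  have habs : Summable fun i => |a i * b i| :=
    Summable.of_nonneg_of_le (fun i => abs_nonneg _) (fun i => two_abs_le _ _)
      ((ha.add hb).div_const 2)
  have hab : Summable fun i => a i * b i := Summable.of_abs habs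
  refine ⟨hab, ?_⟩
  have hA : 0 ≤ ∑' i, a i ^ 2 := tsum_nonneg fun i => sq_nonneg _
  have h1 : |∑' i, a i * b i| ≤ ∑' i, |a i * b i| := by
    simpa only [Real.norm_eq_abs] using
      norm_tsum_le_tsum_norm (f := fun i => a i * b i) (by simpa only [Real.norm_eq_abs] using habs)
  refine h1.trans (Summable.tsum_le_of_sum_le habs fun s => ?_)
  have h2 : (∑ i ∈ s, |a i * b i|) ^ 2 ≤ (∑ i ∈ s, a i ^ 2) * ∑ i ∈ s, b i ^ 2 := by
    have := Finset.sum_mul_sq_le_sq_mul_sq s (fun i => |a i|) (fun i => |b i|)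
    simpa [abs_mul, sq_abs] using this
  have h3 : (∑ i ∈ s, a i ^ 2) ≤ ∑' i, a i ^ 2 := Summable.sum_le_tsum s (fun i _ => sq_nonneg _) ha
  have h4 : (∑ i ∈ s, b i ^ 2) ≤ ∑' i, b i ^ 2 := Summable.sum_le_tsum s (fun i _ => sq_nonneg _) hb
  have h5 : (∑ i ∈ s, |a i * b i|) ^ 2 ≤ (∑' i, a i ^ 2) * ∑' i, b i ^ 2 :=
    h2.trans (mul_le_mul h3 h4 (Finset.sum_nonneg fun i _ => sq_nonneg _) hA)
  have h6 : 0 ≤ ∑ i ∈ s, |a i * b i| := Finset.sum_nonneg fun i _ => abs_nonneg _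
  calc ∑ i ∈ s, |a i * b i| = Real.sqrt ((∑ i ∈ s, |a i * b i|) ^ 2) := (Real.sqrt_sq h6).symm
    _ ≤ Real.sqrt ((∑' i, a i ^ 2) * ∑' i, b i ^ 2) := Real.sqrt_le_sqrt h5
    _ = _ := Real.sqrt_mul hA _

variable (m : V → ℝ) (μ : V → V → ℝ)

lemma summable_row (hlf : ∀ x, {y | μ x y ≠ 0}.Finite) (x : V) (c : V → ℝ) :
    Summable fun y => μ x y * c y :=
  summable_of_finsupp <| (hlf x).subset fun y hy => by
    simp only [Function.mem_support] at hy
    exact fun h0 => hy (by rw [h0, zero_mul])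

lemma glap_mul_m (hm : ∀ x, 0 < m x) (f : V → ℝ) (x : V) :
    glap m μ f x * m x = ∑' y, μ x y * (f y - f x) := by
  have h := (hm x).ne'
  simp only [glap]
  field_simp

lemma ggam_mul_m (hm : ∀ x, 0 < m x) (hlf : ∀ x, {y | μ x y ≠ 0}.Finite) (f g : V → ℝ) (x : V) :
    ggam m μ f g x * m x = (1 / 2) * ∑' y, μ x y * ((f y - f x) * (g y - g x)) := by
  have S1 : Summable fun y => μ x y * (f y * g y - f x * g x) := summable_row μ hlf x _
  have S2 : Summable fun y => μ x y * (g y - g x) := summable_row μ hlf x _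
  have S3 : Summable fun y => μ x y * (f y - f x) := summable_row μ hlf x _
  have key : ∑' y, μ x y * ((f y - f x) * (g y - g x))
      = (∑' y, μ x y * (f y * g y - f x * g x))
        - (f x * ∑' y, μ x y * (g y - g x) + g x * ∑' y, μ x y * (f y - f x)) := by
    rw [← tsum_mul_left (a := f x), ← tsum_mul_left (a := g x),
      ← Summable.tsum_add (S2.mul_left _) (S3.mul_left _),
      ← Summable.tsum_sub S1 ((S2.mul_left _).add (S3.mul_left _))]
    exact tsum_congr fun y => by ring
  have h1 : ggam m μ f g x * m x
      = (1 / 2) * ((glap m μ (fun y => f y * g y) x * m x) - f x * (glap m μ g x * m x)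
          - g x * (glap m μ f x * m x)) := by
    simp only [ggam]; ring
  rw [h1, glap_mul_m m μ hm, glap_mul_m m μ hm, glap_mul_m m μ hm, key]
  ring

lemma support_pair_finite (hsymm : ∀ x y, μ x y = μ y x) (hlf : ∀ x, {y | μ x y ≠ 0}.Finite)
    {η : V → ℝ} (hη : (Function.support η).Finite) {F : V × V → ℝ}
    (hF : ∀ p : V × V, μ p.1 p.2 = 0 → F p = 0)
    (hF2 : ∀ p : V × V, η p.1 = 0 → η p.2 = 0 → F p = 0) :
    (Function.support F).Finite := by
  have hN : (⋃ x ∈ Function.support η, {y | μ x y ≠ 0}).Finite := hη.biUnion fun x _ => hlf x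
  have hS : (Function.support η ∪ ⋃ x ∈ Function.support η, {y | μ x y ≠ 0}).Finite :=
    hη.union hN
  refine (hS.prod hS).subset ?_
  rintro ⟨x, y⟩ hp
  simp only [Function.mem_support] at hp
  have hμ : μ x y ≠ 0 := fun h => hp (hF _ h)
  have hor : η x ≠ 0 ∨ η y ≠ 0 := by
    by_contra h
    push_neg at h
    exact hp (hF2 _ h.1 h.2)
  rcases hor with hx | hy
  · exact Set.mem_prod.mpr ⟨Set.mem_union_left _ (Function.mem_support.mpr hx),
      Set.mem_union_right _ (Set.mem_biUnion (Function.mem_support.mpr hx) hμ)⟩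
  · refine Set.mem_prod.mpr ⟨Set.mem_union_right _ ?_,
      Set.mem_union_left _ (Function.mem_support.mpr hy)⟩
    exact Set.mem_biUnion (Function.mem_support.mpr hy) (by simpa [hsymm y x] using hμ)

end Stmt7Aux

section Stmt7Aux2

variable {V : Type*} (m : V → ℝ) (μ : V → V → ℝ)

lemma green_fin' (hm : ∀ x, 0 < m x) (hsymm : ∀ x y, μ x y = μ y x)
    (hlf : ∀ x, {y | μ x y ≠ 0}.Finite)
    {φ : V → ℝ} (hφ : (Function.support φ).Finite) (g : V → ℝ) :
    (Summable fun p : V × V => μ p.1 p.2 * ((φ p.2 - φ p.1) * (g p.2 - g p.1))) ∧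
    (Summable fun x => φ x * glap m μ g x * m x) ∧
    ∑' p : V × V, μ p.1 p.2 * ((φ p.2 - φ p.1) * (g p.2 - g p.1))
      = -2 * ∑' x, φ x * glap m μ g x * m x := by
  set u : V × V → ℝ := fun p => μ p.1 p.2 * (φ p.1 * (g p.2 - g p.1)) with hu_def
  set v : V × V → ℝ := fun p => μ p.1 p.2 * ((φ p.2 - φ p.1) * (g p.2 - g p.1)) with hv_def
  have hUfin : (Function.support u).Finite :=
    support_pair_finite μ hsymm hlf hφ (fun p h => by simp [hu_def, h])
      (fun p h1 h2 => by simp [hu_def, h1])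
  have hVfin : (Function.support v).Finite :=
    support_pair_finite μ hsymm hlf hφ (fun p h => by simp [hv_def, h])
      (fun p h1 h2 => by simp [hv_def, h1, h2])
  have hU : Summable u := summable_of_finsupp hUfin
  have hV : Summable v := summable_of_finsupp hVfin
  have hrowU : ∀ x, Summable fun y => u (x, y) := fun x =>
    summable_row μ hlf x (fun y => φ x * (g y - g x))
  have hUeq : ∑' p, u p = ∑' x, φ x * glap m μ g x * m x := by
    rw [Summable.tsum_prod' hU hrowU]
    refine tsum_congr fun x => ?_
    have h1 : (fun y => u (x, y)) = fun y => φ x * (μ x y * (g y - g x)) := by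
      funext y
      show μ x y * (φ x * (g y - g x)) = φ x * (μ x y * (g y - g x))
      ring
    rw [h1, tsum_mul_left, ← glap_mul_m m μ hm g x]
    ring
  have hUswap : Summable fun p : V × V => u p.swap := hU.prod_symm
  have hswap_eq : ∑' p : V × V, u p.swap = ∑' p, u p := by
    simpa using (Equiv.prodComm V V).tsum_eq u
  have hpoint : ∀ p : V × V, u p + u p.swap = -v p := by
    rintro ⟨x, y⟩
    show μ x y * (φ x * (g y - g x)) + μ y x * (φ y * (g x - g y))
        = -(μ x y * ((φ y - φ x) * (g y - g x)))
    rw [hsymm y x]; ring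
  have hsum2 : ∑' p, u p + ∑' p, u p = -∑' p, v p := by
    calc ∑' p, u p + ∑' p, u p = ∑' p, u p + ∑' p : V × V, u p.swap := by rw [hswap_eq]
      _ = ∑' p : V × V, (u p + u p.swap) := (Summable.tsum_add hU hUswap).symm
      _ = ∑' p : V × V, (-v p) := tsum_congr hpoint
      _ = -∑' p, v p := tsum_neg
  have hAsum : Summable fun x => φ x * glap m μ g x * m x :=
    summable_of_finsupp (hφ.subset fun x hx => by
      simp only [Function.mem_support] at hx ⊢
      exact fun h0 => hx (by rw [h0, zero_mul, zero_mul]))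
  refine ⟨hV, hAsum, ?_⟩
  rw [← hUeq]
  linarith [hsum2]

lemma gamma_sum_le (hm : ∀ x, 0 < m x) (hsymm : ∀ x y, μ x y = μ y x)
    (hlf : ∀ x, {y | μ x y ≠ 0}.Finite)
    {η : V → ℝ} (hηf : (Function.support η).Finite)
    {c : ℝ} (hc : ∀ x, ggam m μ η η x ≤ c) (u : V → ℝ)
    (hu : Summable fun x => m x * u x ^ 2) :
    (Summable fun p : V × V => μ p.1 p.2 * (u p.1 * (η p.2 - η p.1)) ^ 2) ∧
    ∑' p : V × V, μ p.1 p.2 * (u p.1 * (η p.2 - η p.1)) ^ 2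
      ≤ 2 * c * ∑' x, m x * u x ^ 2 := by
  set F : V × V → ℝ := fun p => μ p.1 p.2 * (u p.1 * (η p.2 - η p.1)) ^ 2 with hF_def
  have hFfin : (Function.support F).Finite :=
    support_pair_finite μ hsymm hlf hηf (fun p h => by simp [hF_def, h])
      (fun p h1 h2 => by simp [hF_def, h1, h2])
  have hF : Summable F := summable_of_finsupp hFfin
  have hrow : ∀ x, Summable fun y => F (x, y) := fun x =>
    summable_row μ hlf x (fun y => (u x * (η y - η x)) ^ 2)
  have hinner : ∀ x, ∑' y, F (x, y) ≤ u x ^ 2 * (2 * (c * m x)) := by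
    intro x
    have h1 : (fun y => F (x, y)) = fun y => u x ^ 2 * (μ x y * ((η y - η x) * (η y - η x))) := by
      funext y
      show μ x y * (u x * (η y - η x)) ^ 2 = u x ^ 2 * (μ x y * ((η y - η x) * (η y - η x)))
      ring
    have h2 : ggam m μ η η x * m x = (1 / 2) * ∑' y, μ x y * ((η y - η x) * (η y - η x)) :=
      ggam_mul_m m μ hm hlf η η x
    have h3 : ∑' y, μ x y * ((η y - η x) * (η y - η x)) = 2 * (ggam m μ η η x * m x) := by
      rw [h2]; ring
    rw [h1, tsum_mul_left, h3]
    have h4 : ggam m μ η η x * m x ≤ c * m x :=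
      mul_le_mul_of_nonneg_right (hc x) (hm x).le
    nlinarith [sq_nonneg (u x)]
  have hmarg : Summable fun x => ∑' y, F (x, y) := by
    refine summable_of_finsupp ?_
    refine (hFfin.image Prod.fst).subset fun x hx => ?_
    simp only [Function.mem_support] at hx
    by_contra hximg
    apply hx
    have hz : ∀ y, F (x, y) = 0 := fun y => by
      by_contra hFy
      exact hximg ⟨(x, y), Function.mem_support.mpr hFy, rfl⟩
    simp [hz]
  have hRHS : Summable fun x => u x ^ 2 * (2 * (c * m x)) :=
    (hu.mul_left (2 * c)).congr fun x => by ring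
  refine ⟨hF, ?_⟩
  calc ∑' p, F p = ∑' x, ∑' y, F (x, y) := Summable.tsum_prod' hF hrow
    _ ≤ ∑' x, u x ^ 2 * (2 * (c * m x)) := Summable.tsum_le_tsum hinner hmarg hRHS
    _ = 2 * c * ∑' x, m x * u x ^ 2 := by
        rw [← tsum_mul_left]
        exact tsum_congr fun x => by ring

end Stmt7Aux2

section Stmt7Aux3

variable {V : Type*} (m : V → ℝ) (μ : V → V → ℝ)

/-- Uniform boundedness of the cutoff sequence. -/
lemma cutoff_abs_bound {η : ℕ → V → ℝ} (hsupp : ∀ k, (Function.support (η k)).Finite)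
    (hmono : ∀ x, Monotone fun k => η k x)
    (htend : ∀ x, Tendsto (fun k => η k x) atTop (nhds 1)) :
    ∃ C : ℝ, 1 ≤ C ∧ ∀ k x, |η k x| ≤ C := by
  classical
  set s0 := (hsupp 0).toFinset with hs0
  refine ⟨1 + ∑ x ∈ s0, |η 0 x|, ?_, ?_⟩
  · have h0 : (0:ℝ) ≤ ∑ x ∈ s0, |η 0 x| := Finset.sum_nonneg fun i _ => abs_nonneg _
    linarith
  · intro k x
    have hle1 : η k x ≤ 1 := (hmono x).ge_of_tendsto (htend x) k
    have hsum0 : |η 0 x| ≤ ∑ y ∈ s0, |η 0 y| := by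
      by_cases hx : x ∈ s0
      · exact Finset.single_le_sum (f := fun y => |η 0 y|) (fun i _ => abs_nonneg _) hx
      · have hzero : η 0 x = 0 := by
          by_contra h
          exact hx ((hsupp 0).mem_toFinset.mpr h)
        rw [hzero, abs_zero]
        exact Finset.sum_nonneg fun i _ => abs_nonneg _
    have h0 : η 0 x ≤ η k x := (hmono x) (Nat.zero_le k)
    have hna := neg_abs_le (η 0 x)
    rw [abs_le]
    constructor
    · linarith
    · have : (0:ℝ) ≤ ∑ y ∈ s0, |η 0 y| := Finset.sum_nonneg fun i _ => abs_nonneg _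
      linarith

set_option maxHeartbeats 1600000 in
lemma gD_subset_Q (hm : ∀ x, 0 < m x) (hsymm : ∀ x y, μ x y = μ y x)
    (hnn : ∀ x y, 0 ≤ μ x y) (hlf : ∀ x, {y | μ x y ≠ 0}.Finite)
    {η : ℕ → V → ℝ} (hsupp : ∀ k, (Function.support (η k)).Finite)
    (hmono : ∀ x, Monotone fun k => η k x)
    (htend : ∀ x, Tendsto (fun k => η k x) atTop (nhds 1))
    (hbd : ∀ k : ℕ, 1 ≤ k → ∀ x, ggam m μ (η k) (η k) x ≤ 1 / (k : ℝ))
    (g : V → ℝ)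
    (hgl2 : Summable fun x => m x * g x ^ 2)
    (hgD : Summable fun x => m x * (glap m μ g x) ^ 2) :
    Summable fun p : V × V => μ p.1 p.2 * (g p.2 - g p.1) ^ 2 := by
  obtain ⟨C, hC1, habs⟩ := cutoff_abs_bound hsupp hmono htend
  -- dominating constant for the `g Δg` term
  have hGdom : Summable fun x => |g x * glap m μ g x| * m x :=
    Summable.of_nonneg_of_le (fun x => mul_nonneg (abs_nonneg _) (hm x).le)
      (fun x => abs_mul_mul_le _ _ _ (hm x).le)
      ((hgl2.add hgD).div_const 2)
  set D : ℝ := ∑' x, |g x * glap m μ g x| * m x with hD_def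
  set G : ℝ := ∑' x, m x * g x ^ 2 with hG_def
  have hDnn : 0 ≤ D := tsum_nonneg fun x => mul_nonneg (abs_nonneg _) (hm x).le
  have hGnn : 0 ≤ G := tsum_nonneg fun x => mul_nonneg (hm x).le (sq_nonneg _)
  set K : ℝ := 4 * (C ^ 2 * D) + 8 * G with hK_def
  -- uniform bound on the truncated energies
  have hSk : ∀ k : ℕ, 1 ≤ k →
      (Summable fun p : V × V => μ p.1 p.2 * (η k p.2) ^ 2 * (g p.2 - g p.1) ^ 2) ∧
      ∑' p : V × V, μ p.1 p.2 * (η k p.2) ^ 2 * (g p.2 - g p.1) ^ 2 ≤ K := by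
    intro k hk
    set φ : V → ℝ := fun x => (η k x) ^ 2 * g x with hφ_def
    have hφf : (Function.support φ).Finite := (hsupp k).subset fun x hx => by
      simp only [Function.mem_support] at hx ⊢
      intro h0
      exact hx (by simp [hφ_def, h0])
    obtain ⟨hVsum, hAsum, hGreen⟩ := green_fin' m μ hm hsymm hlf hφf g
    set P1 : V × V → ℝ := fun p => μ p.1 p.2 * (η k p.2) ^ 2 * (g p.2 - g p.1) ^ 2 with hP1_def
    have hP1fin : (Function.support P1).Finite :=
      support_pair_finite μ hsymm hlf (hsupp k)
        (fun p h => by simp [hP1_def, h]) (fun p h1 h2 => by simp [hP1_def, h2])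
    have hP1 : Summable P1 := summable_of_finsupp hP1fin
    set S := ∑' p, P1 p with hS_def
    have hSnn : 0 ≤ S := tsum_nonneg fun p =>
      mul_nonneg (mul_nonneg (hnn p.1 p.2) (sq_nonneg _)) (sq_nonneg _)
    refine ⟨hP1, ?_⟩
    set P1' : V × V → ℝ := fun p => μ p.1 p.2 * (η k p.1) ^ 2 * (g p.2 - g p.1) ^ 2 with hP1'_def
    have hswap_pt : ∀ p : V × V, P1 p.swap = P1' p := by
      rintro ⟨x, y⟩
      show μ y x * (η k x) ^ 2 * (g x - g y) ^ 2 = μ x y * (η k x) ^ 2 * (g y - g x) ^ 2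
      rw [hsymm y x]; ring
    have hP1' : Summable P1' := hP1.prod_symm.congr hswap_pt
    have hT : ∑' p, P1' p = S := by
      have h := (Equiv.prodComm V V).tsum_eq P1
      simp only [Equiv.prodComm_apply] at h
      rw [hS_def, ← h]
      exact tsum_congr fun p => (hswap_pt p).symm
    set P2 : V × V → ℝ := fun p =>
      μ p.1 p.2 * (g p.1 * ((η k p.2 + η k p.1) * (η k p.2 - η k p.1)) * (g p.2 - g p.1))
      with hP2_def
    have hdecomp : ∀ p : V × V,
        μ p.1 p.2 * ((φ p.2 - φ p.1) * (g p.2 - g p.1)) = P1 p + P2 p := by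
      rintro ⟨x, y⟩
      show μ x y * (((η k y) ^ 2 * g y - (η k x) ^ 2 * g x) * (g y - g x))
          = μ x y * (η k y) ^ 2 * (g y - g x) ^ 2
            + μ x y * (g x * ((η k y + η k x) * (η k y - η k x)) * (g y - g x))
      ring
    have hP2 : Summable P2 := (hVsum.sub hP1).congr fun p => by
      have := hdecomp p; linarith
    have hvsum_eq : ∑' p : V × V, μ p.1 p.2 * ((φ p.2 - φ p.1) * (g p.2 - g p.1))
        = S + ∑' p, P2 p := by
      rw [tsum_congr hdecomp, Summable.tsum_add hP1 hP2]
    -- bound on the boundary term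
    have hAbound : |∑' x, φ x * glap m μ g x * m x| ≤ C ^ 2 * D := by
      have hdom : Summable fun x => C ^ 2 * (|g x * glap m μ g x| * m x) := hGdom.mul_left _
      have hptw : ∀ x, |φ x * glap m μ g x * m x| ≤ C ^ 2 * (|g x * glap m μ g x| * m x) := by
        intro x
        have h2 : (η k x) ^ 2 ≤ C ^ 2 := by
          have := habs k x
          nlinarith [abs_nonneg (η k x), sq_abs (η k x)]
        have h1 : |φ x * glap m μ g x * m x| = (η k x) ^ 2 * (|g x * glap m μ g x| * m x) := by
          show |(η k x) ^ 2 * g x * glap m μ g x * m x| = _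
          rw [show (η k x) ^ 2 * g x * glap m μ g x * m x
              = (η k x) ^ 2 * ((g x * glap m μ g x) * m x) by ring]
          rw [abs_mul, abs_of_nonneg (sq_nonneg (η k x)), abs_mul, abs_of_pos (hm x)]
        rw [h1]
        exact mul_le_mul_of_nonneg_right h2 (mul_nonneg (abs_nonneg _) (hm x).le)
      calc |∑' x, φ x * glap m μ g x * m x| ≤ ∑' x, |φ x * glap m μ g x * m x| := by
            simpa only [Real.norm_eq_abs] using
              norm_tsum_le_tsum_norm (f := fun x => φ x * glap m μ g x * m x)
                (by simpa only [Real.norm_eq_abs] using hAsum.abs)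
        _ ≤ ∑' x, C ^ 2 * (|g x * glap m μ g x| * m x) := Summable.tsum_le_tsum hptw hAsum.abs hdom
        _ = C ^ 2 * D := by rw [tsum_mul_left]
    -- Cauchy-Schwarz on P2
    set a : V × V → ℝ := fun p => Real.sqrt (μ p.1 p.2) * (g p.1 * (η k p.2 - η k p.1))
      with ha_def
    set b : V × V → ℝ := fun p =>
      Real.sqrt (μ p.1 p.2) * ((η k p.2 + η k p.1) * (g p.2 - g p.1)) with hb_def
    have hab : ∀ p, a p * b p = P2 p := by
      rintro ⟨x, y⟩
      show (Real.sqrt (μ x y) * (g x * (η k y - η k x)))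
          * (Real.sqrt (μ x y) * ((η k y + η k x) * (g y - g x)))
          = μ x y * (g x * ((η k y + η k x) * (η k y - η k x)) * (g y - g x))
      rw [show (Real.sqrt (μ x y) * (g x * (η k y - η k x)))
          * (Real.sqrt (μ x y) * ((η k y + η k x) * (g y - g x)))
          = (Real.sqrt (μ x y) * Real.sqrt (μ x y))
            * ((g x * (η k y - η k x)) * ((η k y + η k x) * (g y - g x))) by ring]
      rw [Real.mul_self_sqrt (hnn x y)]
      ring
    have hasq : ∀ p : V × V, a p ^ 2 = μ p.1 p.2 * (g p.1 * (η k p.2 - η k p.1)) ^ 2 := by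
      rintro ⟨x, y⟩
      show (Real.sqrt (μ x y) * (g x * (η k y - η k x))) ^ 2 = μ x y * (g x * (η k y - η k x)) ^ 2
      rw [mul_pow, Real.sq_sqrt (hnn x y)]
    have hbsq : ∀ p : V × V,
        b p ^ 2 = μ p.1 p.2 * ((η k p.2 + η k p.1) * (g p.2 - g p.1)) ^ 2 := by
      rintro ⟨x, y⟩
      show (Real.sqrt (μ x y) * ((η k y + η k x) * (g y - g x))) ^ 2
          = μ x y * ((η k y + η k x) * (g y - g x)) ^ 2
      rw [mul_pow, Real.sq_sqrt (hnn x y)]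
    obtain ⟨haS, haB⟩ := gamma_sum_le m μ hm hsymm hlf (hsupp k) (hbd k hk) g hgl2
    have ha2 : Summable fun p => a p ^ 2 := haS.congr fun p => (hasq p).symm
    have ha2le : ∑' p, a p ^ 2 ≤ 2 * G := by
      have hk1 : 1 / (k : ℝ) ≤ 1 := by
        rw [div_le_one (by exact_mod_cast hk : (0:ℝ) < (k:ℝ))]
        exact_mod_cast hk
      calc ∑' p, a p ^ 2 = ∑' p : V × V, μ p.1 p.2 * (g p.1 * (η k p.2 - η k p.1)) ^ 2 :=
            tsum_congr hasq
        _ ≤ 2 * (1 / (k : ℝ)) * G := haB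
        _ ≤ 2 * G := by nlinarith
    have hb2fin : (Function.support fun p => b p ^ 2).Finite :=
      support_pair_finite μ hsymm hlf (hsupp k)
        (fun p h => by rw [hbsq p, h]; ring)
        (fun p h1 h2 => by rw [hbsq p, h1, h2]; ring)
    have hb2 : Summable fun p => b p ^ 2 := summable_of_finsupp hb2fin
    have hb2_le : ∑' p, b p ^ 2 ≤ 4 * S := by
      have hpt : ∀ p : V × V, b p ^ 2 ≤ 2 * P1 p + 2 * P1' p := by
        rintro ⟨x, y⟩
        rw [hbsq ⟨x, y⟩]
        show μ x y * ((η k y + η k x) * (g y - g x)) ^ 2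
            ≤ 2 * (μ x y * (η k y) ^ 2 * (g y - g x) ^ 2)
              + 2 * (μ x y * (η k x) ^ 2 * (g y - g x) ^ 2)
        nlinarith [mul_nonneg (hnn x y) (sq_nonneg ((η k y - η k x) * (g y - g x)))]
      calc ∑' p, b p ^ 2 ≤ ∑' p : V × V, (2 * P1 p + 2 * P1' p) :=
            Summable.tsum_le_tsum hpt hb2 ((hP1.mul_left 2).add (hP1'.mul_left 2))
        _ = 2 * S + 2 * S := by
            rw [Summable.tsum_add (hP1.mul_left 2) (hP1'.mul_left 2), tsum_mul_left, tsum_mul_left, hT,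
              ← hS_def]
        _ = 4 * S := by ring
    obtain ⟨hP2sum', hCS⟩ := tsum_abs_mul_le a b ha2 hb2
    have hP2bound : |∑' p, P2 p| ≤ Real.sqrt (2 * G) * (2 * Real.sqrt S) := by
      rw [← tsum_congr hab]
      refine hCS.trans ?_
      refine mul_le_mul (Real.sqrt_le_sqrt ha2le) ?_ (Real.sqrt_nonneg _) (Real.sqrt_nonneg _)
      calc Real.sqrt (∑' p, b p ^ 2) ≤ Real.sqrt (4 * S) := Real.sqrt_le_sqrt hb2_le
        _ = 2 * Real.sqrt S := by
            rw [show (4:ℝ) * S = 2 ^ 2 * S by ring,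
              Real.sqrt_mul (by norm_num : (0:ℝ) ≤ 2 ^ 2), Real.sqrt_sq (by norm_num : (0:ℝ) ≤ 2)]
    -- combine
    have hS_id : S = -2 * ∑' x, φ x * glap m μ g x * m x - ∑' p, P2 p := by
      rw [← hGreen, hvsum_eq]; ring
    obtain ⟨hAl, hAu⟩ := abs_le.mp hAbound
    obtain ⟨hPl, hPu⟩ := abs_le.mp hP2bound
    have hSbound : S ≤ 2 * (C ^ 2 * D) + Real.sqrt (2 * G) * (2 * Real.sqrt S) := by
      linarith [hS_id]
    have hsq1 : Real.sqrt (2 * G) ^ 2 = 2 * G := Real.sq_sqrt (by linarith)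
    have hsq2 : Real.sqrt S ^ 2 = S := Real.sq_sqrt hSnn
    rw [hK_def]
    nlinarith [sq_nonneg (2 * Real.sqrt (2 * G) - Real.sqrt S), Real.sqrt_nonneg (2 * G),
      Real.sqrt_nonneg S]
  -- conclude summability from the uniform bound
  refine summable_of_sum_le (c := K) (fun p => mul_nonneg (hnn p.1 p.2) (sq_nonneg _)) fun s => ?_
  have hlim : Tendsto (fun k : ℕ => ∑ p ∈ s, μ p.1 p.2 * (η k p.2) ^ 2 * (g p.2 - g p.1) ^ 2)
      atTop (nhds (∑ p ∈ s, μ p.1 p.2 * (g p.2 - g p.1) ^ 2)) := by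
    refine tendsto_finset_sum s fun p _ => ?_
    have h1 : Tendsto (fun k => (η k p.2) ^ 2) atTop (nhds 1) := by
      simpa using (htend p.2).pow 2
    have := (h1.const_mul (μ p.1 p.2)).mul_const ((g p.2 - g p.1) ^ 2)
    simpa [mul_one] using this
  refine le_of_tendsto hlim ?_
  filter_upwards [eventually_ge_atTop 1] with k hk
  obtain ⟨hsumk, hboundk⟩ := hSk k hk
  calc ∑ p ∈ s, μ p.1 p.2 * (η k p.2) ^ 2 * (g p.2 - g p.1) ^ 2
      ≤ ∑' p : V × V, μ p.1 p.2 * (η k p.2) ^ 2 * (g p.2 - g p.1) ^ 2 :=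
        Summable.sum_le_tsum s (fun p _ =>
          mul_nonneg (mul_nonneg (hnn p.1 p.2) (sq_nonneg _)) (sq_nonneg _)) hsumk
    _ ≤ K := hboundk

end Stmt7Aux3

set_option maxHeartbeats 1600000 in
theorem stmt7' {V : Type*} (m : V → ℝ) (μ : V → V → ℝ)
    (hm : ∀ x, 0 < m x) (hsymm : ∀ x y, μ x y = μ y x) (hnn : ∀ x y, 0 ≤ μ x y)
    (hlf : ∀ x, {y | μ x y ≠ 0}.Finite)
    (hcomp : ∃ η : ℕ → V → ℝ, (∀ k, (Function.support (η k)).Finite) ∧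
      (∀ x, Monotone fun k => η k x) ∧
      (∀ x, Tendsto (fun k => η k x) atTop (nhds 1)) ∧
      (∀ k : ℕ, 1 ≤ k → ∀ x, ggam m μ (η k) (η k) x ≤ 1 / (k : ℝ)))
    (f g : V → ℝ)
    (hfl2 : Summable fun x => m x * f x ^ 2)
    (hfQ : Summable fun p : V × V => μ p.1 p.2 * (f p.2 - f p.1) ^ 2)
    (hgl2 : Summable fun x => m x * g x ^ 2)
    (hgD : Summable fun x => m x * (glap m μ g x) ^ 2) :
    (Summable fun x => f x * glap m μ g x * m x) ∧
    (Summable fun x => ggam m μ f g x * m x) ∧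
    ∑' x, f x * glap m μ g x * m x = -∑' x, ggam m μ f g x * m x := by
  obtain ⟨η, hsupp, hmono, htend, hbd⟩ := hcomp
  obtain ⟨C, hC1, habs⟩ := cutoff_abs_bound hsupp hmono htend
  have hgQ : Summable fun p : V × V => μ p.1 p.2 * (g p.2 - g p.1) ^ 2 :=
    gD_subset_Q m μ hm hsymm hnn hlf hsupp hmono htend hbd g hgl2 hgD
  set w : V × V → ℝ := fun p => μ p.1 p.2 * ((f p.2 - f p.1) * (g p.2 - g p.1)) with hw_def
  have hwabs : ∀ p : V × V,
      |w p| ≤ (μ p.1 p.2 * (f p.2 - f p.1) ^ 2 + μ p.1 p.2 * (g p.2 - g p.1) ^ 2) / 2 := by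
    rintro ⟨x, y⟩
    show |μ x y * ((f y - f x) * (g y - g x))| ≤ _
    rw [abs_mul, abs_of_nonneg (hnn x y)]
    calc μ x y * |(f y - f x) * (g y - g x)|
        ≤ μ x y * (((f y - f x) ^ 2 + (g y - g x) ^ 2) / 2) :=
          mul_le_mul_of_nonneg_left (two_abs_le _ _) (hnn x y)
      _ = _ := by ring
  have hwsum : Summable w :=
    Summable.of_abs (Summable.of_nonneg_of_le (fun p => abs_nonneg _) hwabs
      ((hfQ.add hgQ).div_const 2))
  have hwrow : ∀ x, Summable fun y => w (x, y) := fun x =>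
    summable_row μ hlf x (fun y => (f y - f x) * (g y - g x))
  have hwmarg : Summable fun x => ∑' y, w (x, y) :=
    (HasSum.prod_fiberwise hwsum.hasSum fun x => (hwrow x).hasSum).summable
  have hggam_eq : ∀ x : V, ggam m μ f g x * m x = (1 / 2) * ∑' y, w (x, y) := fun x => by
    rw [ggam_mul_m m μ hm hlf f g x]
  have hconj2 : Summable fun x => ggam m μ f g x * m x :=
    (hwmarg.mul_left (1 / 2)).congr fun x => (hggam_eq x).symm
  have hconj1 : Summable fun x => f x * glap m μ g x * m x := by
    refine Summable.of_abs (Summable.of_nonneg_of_le (fun x => abs_nonneg _) ?_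
      ((hfl2.add hgD).div_const 2))
    intro x
    have h : |f x * glap m μ g x * m x| = |f x * glap m μ g x| * m x := by
      rw [abs_mul, abs_of_pos (hm x)]
    rw [h]
    exact abs_mul_mul_le _ _ _ (hm x).le
  have hBeq : ∑' x, ggam m μ f g x * m x = (1 / 2) * ∑' p, w p := by
    rw [tsum_congr hggam_eq, tsum_mul_left, ← Summable.tsum_prod' hwsum hwrow]
  have hFdom : Summable fun x => |f x * glap m μ g x| * m x :=
    Summable.of_nonneg_of_le (fun x => mul_nonneg (abs_nonneg _) (hm x).le)
      (fun x => abs_mul_mul_le _ _ _ (hm x).le) ((hfl2.add hgD).div_const 2)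
  have hφf : ∀ k, (Function.support fun x => η k x * f x).Finite := fun k =>
    (hsupp k).subset fun x hx => by
      simp only [Function.mem_support] at hx ⊢
      exact fun h0 => hx (by rw [h0, zero_mul])
  have hgreenk := fun k => green_fin' m μ hm hsymm hlf (hφf k) g
  have htendA : Tendsto (fun k => ∑' x, (η k x * f x) * glap m μ g x * m x) atTop
      (nhds (∑' x, f x * glap m μ g x * m x)) := by
    refine tendsto_tsum_of_dominated_convergence
      (bound := fun x => C * (|f x * glap m μ g x| * m x))
      (hFdom.mul_left C) (fun x => ?_) (Eventually.of_forall fun k x => ?_)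
    · have h := (htend x).mul_const (f x * glap m μ g x * m x)
      simp only [one_mul] at h
      exact Filter.Tendsto.congr (fun k => by ring) h
    · rw [Real.norm_eq_abs]
      calc |(η k x * f x) * glap m μ g x * m x| = |η k x| * (|f x * glap m μ g x| * m x) := by
            rw [show (η k x * f x) * glap m μ g x * m x
                = η k x * ((f x * glap m μ g x) * m x) by ring,
              abs_mul, abs_mul, abs_of_pos (hm x)]
        _ ≤ C * (|f x * glap m μ g x| * m x) :=
            mul_le_mul_of_nonneg_right (habs k x) (mul_nonneg (abs_nonneg _) (hm x).le)
  have hvk : ∀ k, Summable fun p : V × V =>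
      μ p.1 p.2 * ((η k p.2 * f p.2 - η k p.1 * f p.1) * (g p.2 - g p.1)) := fun k =>
    ((hgreenk k).1).congr fun p => rfl
  have hAkeq : ∀ k, ∑' x, (η k x * f x) * glap m μ g x * m x
      = -(1/2) * ∑' p : V × V,
          μ p.1 p.2 * ((η k p.2 * f p.2 - η k p.1 * f p.1) * (g p.2 - g p.1)) := by
    intro k
    have h := (hgreenk k).2.2
    linarith [h]
  have hp1sum : ∀ k, Summable fun p : V × V => η k p.2 * w p := fun k =>
    Summable.of_abs (Summable.of_nonneg_of_le (fun p => abs_nonneg _)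
      (fun p => by rw [abs_mul]; exact mul_le_mul_of_nonneg_right (habs k p.2) (abs_nonneg _))
      (hwsum.abs.mul_left C))
  have hdecompk : ∀ k, ∀ p : V × V,
      μ p.1 p.2 * ((η k p.2 * f p.2 - η k p.1 * f p.1) * (g p.2 - g p.1))
        = η k p.2 * w p + μ p.1 p.2 * (f p.1 * ((η k p.2 - η k p.1) * (g p.2 - g p.1))) := by
    rintro k ⟨x, y⟩
    show μ x y * ((η k y * f y - η k x * f x) * (g y - g x))
        = η k y * (μ x y * ((f y - f x) * (g y - g x)))
          + μ x y * (f x * ((η k y - η k x) * (g y - g x)))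
    ring
  have hp2sum : ∀ k, Summable fun p : V × V =>
      μ p.1 p.2 * (f p.1 * ((η k p.2 - η k p.1) * (g p.2 - g p.1))) := fun k =>
    ((hvk k).sub (hp1sum k)).congr fun p => by have := hdecompk k p; linarith
  have hvk_tsum : ∀ k, ∑' p : V × V,
      μ p.1 p.2 * ((η k p.2 * f p.2 - η k p.1 * f p.1) * (g p.2 - g p.1))
      = ∑' p : V × V, η k p.2 * w p
        + ∑' p : V × V, μ p.1 p.2 * (f p.1 * ((η k p.2 - η k p.1) * (g p.2 - g p.1))) :=
    fun k => by rw [tsum_congr (hdecompk k), Summable.tsum_add (hp1sum k) (hp2sum k)]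
  have htendp1 : Tendsto (fun k => ∑' p : V × V, η k p.2 * w p) atTop (nhds (∑' p, w p)) := by
    refine tendsto_tsum_of_dominated_convergence (bound := fun p => C * |w p|)
      (hwsum.abs.mul_left C) (fun p => ?_) (Eventually.of_forall fun k p => ?_)
    · simpa using (htend p.2).mul_const (w p)
    · rw [Real.norm_eq_abs, abs_mul]
      exact mul_le_mul_of_nonneg_right (habs k p.2) (abs_nonneg _)
  set F0 : ℝ := ∑' x, m x * f x ^ 2 with hF0_def
  set QG : ℝ := ∑' p : V × V, μ p.1 p.2 * (g p.2 - g p.1) ^ 2 with hQG_def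
  have htendp2 : Tendsto (fun k => ∑' p : V × V,
      μ p.1 p.2 * (f p.1 * ((η k p.2 - η k p.1) * (g p.2 - g p.1)))) atTop (nhds 0) := by
    refine squeeze_zero_norm'
      (a := fun k : ℕ => Real.sqrt (2 * (1 / (k : ℝ)) * F0) * Real.sqrt QG) ?_ ?_
    · filter_upwards [eventually_ge_atTop 1] with k hk
      obtain ⟨haSk, haBk⟩ := gamma_sum_le m μ hm hsymm hlf (hsupp k) (hbd k hk) f hfl2
      set a : V × V → ℝ := fun p => Real.sqrt (μ p.1 p.2) * (f p.1 * (η k p.2 - η k p.1))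
        with ha_def
      set b : V × V → ℝ := fun p => Real.sqrt (μ p.1 p.2) * (g p.2 - g p.1) with hb_def
      have hasq : ∀ p : V × V, a p ^ 2 = μ p.1 p.2 * (f p.1 * (η k p.2 - η k p.1)) ^ 2 := by
        intro p
        show (Real.sqrt (μ p.1 p.2) * (f p.1 * (η k p.2 - η k p.1))) ^ 2 = _
        rw [mul_pow, Real.sq_sqrt (hnn p.1 p.2)]
      have ha2 : Summable fun p => a p ^ 2 := haSk.congr fun p => (hasq p).symm
      have ha2le : ∑' p, a p ^ 2 ≤ 2 * (1 / (k : ℝ)) * F0 := by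
        calc ∑' p, a p ^ 2 = ∑' p : V × V, μ p.1 p.2 * (f p.1 * (η k p.2 - η k p.1)) ^ 2 :=
              tsum_congr hasq
          _ ≤ 2 * (1 / (k : ℝ)) * F0 := haBk
      have hbsq : ∀ p : V × V, b p ^ 2 = μ p.1 p.2 * (g p.2 - g p.1) ^ 2 := by
        intro p
        show (Real.sqrt (μ p.1 p.2) * (g p.2 - g p.1)) ^ 2 = _
        rw [mul_pow, Real.sq_sqrt (hnn p.1 p.2)]
      have hb2 : Summable fun p => b p ^ 2 := hgQ.congr fun p => (hbsq p).symm
      have hb2eq : ∑' p, b p ^ 2 = QG := by rw [hQG_def]; exact tsum_congr hbsq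
      have habp : ∀ p : V × V, a p * b p
          = μ p.1 p.2 * (f p.1 * ((η k p.2 - η k p.1) * (g p.2 - g p.1))) := by
        rintro ⟨x, y⟩
        show (Real.sqrt (μ x y) * (f x * (η k y - η k x))) * (Real.sqrt (μ x y) * (g y - g x))
            = μ x y * (f x * ((η k y - η k x) * (g y - g x)))
        rw [show (Real.sqrt (μ x y) * (f x * (η k y - η k x)))
            * (Real.sqrt (μ x y) * (g y - g x))
            = (Real.sqrt (μ x y) * Real.sqrt (μ x y)) * ((f x * (η k y - η k x)) * (g y - g x))
            by ring, Real.mul_self_sqrt (hnn x y)]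
        ring
      obtain ⟨habsum, hCS⟩ := tsum_abs_mul_le a b ha2 hb2
      rw [Real.norm_eq_abs, ← tsum_congr habp]
      refine hCS.trans ?_
      rw [hb2eq]
      exact mul_le_mul_of_nonneg_right (Real.sqrt_le_sqrt ha2le) (Real.sqrt_nonneg _)
    · have h1 : Tendsto (fun k : ℕ => 2 * (1 / (k : ℝ)) * F0) atTop (nhds 0) := by
        have hbase := tendsto_const_div_atTop_nhds_zero_nat (2 * F0)
        exact Filter.Tendsto.congr (fun k => by ring) hbase
      have h2 : Tendsto (fun k : ℕ => Real.sqrt (2 * (1 / (k : ℝ)) * F0)) atTop (nhds 0) := by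
        have h3 := (Real.continuous_sqrt.tendsto 0).comp h1
        rw [Real.sqrt_zero] at h3
        exact h3
      simpa using h2.mul_const (Real.sqrt QG)
  have htendB : Tendsto (fun k => ∑' p : V × V,
      μ p.1 p.2 * ((η k p.2 * f p.2 - η k p.1 * f p.1) * (g p.2 - g p.1))) atTop
      (nhds (∑' p, w p)) := by
    have h := htendp1.add htendp2
    rw [add_zero] at h
    exact Filter.Tendsto.congr (fun k => (hvk_tsum k).symm) h
  have htendA2 : Tendsto (fun k => ∑' x, (η k x * f x) * glap m μ g x * m x) atTop
      (nhds (-(1/2) * ∑' p, w p)) := by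
    have h := htendB.const_mul (-(1/2) : ℝ)
    exact Filter.Tendsto.congr (fun k => (hAkeq k).symm) h
  have hfinal := tendsto_nhds_unique htendA htendA2
  refine ⟨hconj1, hconj2, ?_⟩
  rw [hBeq]
  linarith [hfinal]

/-- Green's formula on a complete weighted graph: for `f ∈ D(Q)` and
`g ∈ D(Δ)`, `Σ f Δg m = - Σ Γ(f,g) m`. -/
theorem stmt7 {V : Type*} (m : V → ℝ) (μ : V → V → ℝ)
    (hm : ∀ x, 0 < m x) (hsymm : ∀ x y, μ x y = μ y x) (hnn : ∀ x y, 0 ≤ μ x y)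
    (hlf : ∀ x, {y | μ x y ≠ 0}.Finite)
    (hcomp : IsCompleteGraph m μ)
    (f g : V → ℝ)
    (hfl2 : Summable fun x => m x * f x ^ 2)
    (hfQ : Summable fun p : V × V => μ p.1 p.2 * (f p.2 - f p.1) ^ 2)
    (hgl2 : Summable fun x => m x * g x ^ 2)
    (hgD : Summable fun x => m x * (glap m μ g x) ^ 2) :
    (Summable fun x => f x * glap m μ g x * m x) ∧
    (Summable fun x => ggam m μ f g x * m x) ∧
    ∑' x, f x * glap m μ g x * m x = -∑' x, ggam m μ f g x * m x := by
  exact stmt7' m μ hm hsymm hnn hlf hcomp f g hfl2 hfQ hgl2 hgD
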